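/- Soundness of the tableau calculus CC/TTt: for every finite set Γ of formulae and every formula A, if Γ ⊢_CC/TTt A then Γ ⊨_CC/TT A. -/
import Mathlib


inductive Formula : Type
  | var : Nat → Formula
  | neg : Formula → Formula
  | conj : Formula → Formula → Formula
  | impl : Formula → Formula → Formula
deriving DecidableEq

inductive TV : Type
  | zero
  | half
  | one
deriving DecidableEq

/-- Strong Kleene negation: 0↦1, ½↦½, 1↦0. -/
def tneg : TV → TV
  | .zero => .one
  | .half => .half
  | .one => .zero

/-- min on {0,½,1}. -/
def tmin : TV → TV → TV
  | .zero, _ => .zero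
  | .half, .zero => .zero
  | .half, .half => .half
  | .half, .one => .half
  | .one, b => b

/-- Designated values: ½ and 1. -/
def designated (x : TV) : Prop := x = TV.half ∨ x = TV.one

/-- The Cooper–Cantwell conditional table: f_CC(x,y) = y if x ∈ {½,1}, and ½ if x = 0. -/
def fCC : TV → TV → TV
  | .zero, _ => .half
  | .half, b => b
  | .one, b => b

/-- A CC-evaluation. -/
def IsCCEval (v : Formula → TV) : Prop :=
  (∀ A, v (.neg A) = tneg (v A)) ∧
  (∀ A B, v (.conj A B) = tmin (v A) (v B)) ∧
  (∀ A B, v (.impl A B) = fCC (v A) (v B))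

/-- TT-validity: Γ ⊨_CC/TT A. -/
def CCConsequence (Γ : Set Formula) (A : Formula) : Prop :=
  ∀ v : Formula → TV, IsCCEval v → (∀ B ∈ Γ, designated (v B)) → designated (v A)

/-- Signed formulae A : n. -/
abbrev SForm := Formula × TV

/-- The branch alternatives produced by applying the tableau rule to a signed formula:
each element of the list is one way of extending the current branch. -/
def ruleChildren : SForm → List (List SForm)
  | (.var _, _) => [[]]
  | (.neg A, .one) => [[(A, .zero)]]
  | (.neg A, .zero) => [[(A, .one)]]
  | (.neg A, .half) => [[(A, .half)]]
  | (.conj A B, .one) => [[(A, .one), (B, .one)]]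
  | (.conj A B, .zero) => [[(A, .zero)], [(B, .zero)]]
  | (.conj A B, .half) =>
      [[(A, .one), (B, .half)], [(A, .half), (B, .half)], [(A, .half), (B, .one)]]
  | (.impl A B, .one) => [[(A, .one), (B, .one)], [(A, .half), (B, .one)]]
  | (.impl A B, .zero) => [[(A, .one), (B, .zero)], [(A, .half), (B, .zero)]]
  | (.impl A B, .half) => [[(A, .zero)], [(B, .half)]]

/-- A set of signed formulae is saturated (completed) if every rule has been applied
exhaustively along it: for each signed formula, some branch alternative is included. -/
def Saturated (T : Set SForm) : Prop :=
  ∀ s ∈ T, ∃ c ∈ ruleChildren s, ∀ x ∈ c, x ∈ T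

/-- A branch is open if no formula occurs signed with two distinct values. -/
def OpenBranch (T : Set SForm) : Prop :=
  ∀ A m n, (A, m) ∈ T → (A, n) ∈ T → m = n

/-- `IsBranch S T`: T is (the set of signed formulae on) a branch of the completed
tableau with root S: it contains S, is saturated, and every signed formula on it
either belongs to the root or is introduced by a rule applied to a formula on it. -/
def IsBranch (S T : Set SForm) : Prop :=
  S ⊆ T ∧ Saturated T ∧ ∀ s ∈ T, s ∈ S ∨ ∃ t ∈ T, ∃ c ∈ ruleChildren t, s ∈ c

/-- The completed tableau with root S is closed iff all of its branches are closed. -/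
def TableauClosed (S : Set SForm) : Prop :=
  ∀ T, IsBranch S T → ¬ OpenBranch T

/-- The root labelled B : g B for each B ∈ Γ. -/
def rootSet (Γ : Finset Formula) (g : Formula → TV) : Set SForm :=
  {s | ∃ B ∈ Γ, s = (B, g B)}

/-- Tableau derivability: Γ ⊢ A iff for every assignment of designated values to the
members of Γ, the completed tableau with root Γ (so signed) together with A : 0
is closed. -/
def TabDeriv (Γ : Finset Formula) (A : Formula) : Prop :=
  ∀ g : Formula → TV, (∀ B ∈ Γ, designated (g B)) →
    TableauClosed (rootSet Γ g ∪ {(A, TV.zero)})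

/-- A quasi-evaluation: a functional set of signed formulae that is a proper subset
of (the graph of) some evaluation; in particular it is partial and non-total. -/
def IsQuasiCCEval (G : Set SForm) : Prop :=
  (∀ A m n, (A, m) ∈ G → (A, n) ∈ G → m = n) ∧
  ∃ v : Formula → TV, IsCCEval v ∧ (∀ p ∈ G, v p.1 = p.2) ∧ ∃ A, (A, v A) ∉ G

/-- For every formula, the rule applied to it signed with its actual value has a
branch alternative all of whose elements carry their actual values. -/
lemma exists_correct_child (v : Formula → TV) (hv : IsCCEval v) (B : Formula) :
    ∃ c ∈ ruleChildren (B, v B), ∀ x ∈ c, x.2 = v x.1 := by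
  obtain ⟨hn, hc, hi⟩ := hv
  cases B with
  | var n => exact ⟨[], by simp [ruleChildren]⟩
  | neg C =>
      rw [hn]
      rcases h : v C with _|_|_
      · exact ⟨[(C, TV.zero)], by simp [ruleChildren, tneg], by simp [h]⟩
      · exact ⟨[(C, TV.half)], by simp [ruleChildren, tneg], by simp [h]⟩
      · exact ⟨[(C, TV.one)], by simp [ruleChildren, tneg], by simp [h]⟩
  | conj C D =>
      rw [hc]
      rcases h1 : v C with _|_|_ <;> rcases h2 : v D with _|_|_
      · exact ⟨[(C, TV.zero)], by simp [ruleChildren, tmin], by simp [h1]⟩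
      · exact ⟨[(C, TV.zero)], by simp [ruleChildren, tmin], by simp [h1]⟩
      · exact ⟨[(C, TV.zero)], by simp [ruleChildren, tmin], by simp [h1]⟩
      · exact ⟨[(D, TV.zero)], by simp [ruleChildren, tmin], by simp [h2]⟩
      · exact ⟨[(C, TV.half), (D, TV.half)], by simp [ruleChildren, tmin],
          by simp [h1, h2]⟩
      · exact ⟨[(C, TV.half), (D, TV.one)], by simp [ruleChildren, tmin],
          by simp [h1, h2]⟩
      · exact ⟨[(D, TV.zero)], by simp [ruleChildren, tmin], by simp [h2]⟩
      · exact ⟨[(C, TV.one), (D, TV.half)], by simp [ruleChildren, tmin],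
          by simp [h1, h2]⟩
      · exact ⟨[(C, TV.one), (D, TV.one)], by simp [ruleChildren, tmin],
          by simp [h1, h2]⟩
  | impl C D =>
      rw [hi]
      rcases h1 : v C with _|_|_ <;> rcases h2 : v D with _|_|_
      · exact ⟨[(C, TV.zero)], by simp [ruleChildren, fCC], by simp [h1]⟩
      · exact ⟨[(C, TV.zero)], by simp [ruleChildren, fCC], by simp [h1]⟩
      · exact ⟨[(C, TV.zero)], by simp [ruleChildren, fCC], by simp [h1]⟩
      · exact ⟨[(C, TV.half), (D, TV.zero)], by simp [ruleChildren, fCC],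
          by simp [h1, h2]⟩
      · exact ⟨[(D, TV.half)], by simp [ruleChildren, fCC], by simp [h2]⟩
      · exact ⟨[(C, TV.half), (D, TV.one)], by simp [ruleChildren, fCC],
          by simp [h1, h2]⟩
      · exact ⟨[(C, TV.one), (D, TV.zero)], by simp [ruleChildren, fCC],
          by simp [h1, h2]⟩
      · exact ⟨[(D, TV.half)], by simp [ruleChildren, fCC], by simp [h2]⟩
      · exact ⟨[(C, TV.one), (D, TV.one)], by simp [ruleChildren, fCC],
          by simp [h1, h2]⟩

/-- The branch generated from a root by always choosing the branch alternative whose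
values agree with the evaluation `v`. -/
inductive Gen (v : Formula → TV) (S : Set SForm) : SForm → Prop
  | root {s} : s ∈ S → Gen v S s
  | step {t c s} : Gen v S t → c ∈ ruleChildren t → (∀ x ∈ c, x.2 = v x.1) →
      s ∈ c → Gen v S s

lemma gen_correct {v : Formula → TV} {S : Set SForm}
    (hS : ∀ s ∈ S, s.2 = v s.1) {s : SForm} (h : Gen v S s) : s.2 = v s.1 := by
  induction h with
  | root hs => exact hS _ hs
  | step _ _ hcorr hmem _ => exact hcorr _ hmem

/-- Soundness of the tableau calculus CC/TTt: for every finite set Γ of formulae and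
every formula A, if Γ ⊢_CC/TTt A then Γ ⊨_CC/TT A. -/
theorem ccttt_soundness (Γ : Finset Formula) (A : Formula) :
    TabDeriv Γ A → CCConsequence (↑Γ) A := by
  intro hTab v hv hΓ
  by_contra hA
  have hA0 : v A = TV.zero := by
    rcases h : v A with _|_|_
    · rfl
    · exact absurd (Or.inl h) hA
    · exact absurd (Or.inr h) hA
  have hΓ' : ∀ B ∈ Γ, designated (v B) := fun B hB => hΓ B (by exact_mod_cast hB)
  set S : Set SForm := rootSet Γ v ∪ {(A, TV.zero)} with hSdef
  have hSc : ∀ s ∈ S, s.2 = v s.1 := by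
    rintro s (⟨B, _, rfl⟩ | hs)
    · rfl
    · rcases hs with rfl; exact hA0.symm
  set T : Set SForm := {s | Gen v S s} with hTdef
  have hclosed := hTab v hΓ' T
  apply hclosed
  · refine ⟨fun s hs => Gen.root hs, ?_, ?_⟩
    · intro s hs
      have hcor := gen_correct hSc hs
      obtain ⟨B, m⟩ := s
      have hm : m = v B := hcor
      subst hm
      obtain ⟨c, hc, hcorr⟩ := exists_correct_child v hv B
      exact ⟨c, hc, fun x hx => Gen.step hs hc hcorr hx⟩
    · intro s hs
      cases hs with
      | root h => exact Or.inl h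
      | step ht hc _ hmem => exact Or.inr ⟨_, ht, _, hc, hmem⟩
  · intro B m n hm hn
    have h1 := gen_correct hSc hm
    have h2 := gen_correct hSc hn
    simp only at h1 h2
    rw [h1, h2]
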